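/- Let G be a U_π-group with an abelian normal subgroup A, let p be a prime in π, and let B = {a ∈ A : a^p = 1}. Then the quotient G/B is a U_π-group; that is, if x^m B = y^m B for x, y ∈ G and m ∈ π′ then xB = yB, provided G/A is π′-torsion-free and A is as in the metabelian setting. -/

import Mathlib

/-!
Modulo `A` the group is abelian, so `(x⁻¹y)^m ≡ x^{-m}y^m`, and `π'`-torsion-freeness of `G/A`
puts `a := x⁻¹y` in `A`. Writing `c := x^{-m}(xa)^m` (a product of conjugates of `a`), conjugation
acts on the abelian group `A` by automorphisms, so `(x a^p)^m = x^m c^p`. Since `y = xa`, the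
hypothesis says `c^p = 1`, hence `(x a^p)^m = x^m` and uniqueness of `m`-th roots gives `a^p = 1`.
-/

section

variable {G : Type*} [Group G]

theorem inv_mul_pow_mem_iff_of_commutator_le {A : Subgroup G} [A.Normal]
    (hGA : commutator G ≤ A) (x y : G) (n : ℕ) :
    (x⁻¹ * y) ^ n ∈ A ↔ (x ^ n)⁻¹ * y ^ n ∈ A := by
  have := Subgroup.Normal.quotient_commutative_iff_commutator_le.mpr hGA
  have hxy : Commute (x : G ⧸ A)⁻¹ (y : G ⧸ A) := mul_comm' _ _
  rw [← QuotientGroup.eq_one_iff, ← QuotientGroup.eq_one_iff (_ * _)]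
  simp [hxy.mul_pow]

theorem inv_pow_succ_mul_mul_pow_succ (x a : G) (n : ℕ) :
    (x ^ (n + 1))⁻¹ * (x * a) ^ (n + 1) = x⁻¹ * ((x ^ n)⁻¹ * (x * a) ^ n) * x * a := by
  rw [pow_succ, pow_succ]
  group

variable {A : Subgroup G} [A.Normal] {x a : G}

theorem inv_pow_mul_mul_pow_mem (ha : a ∈ A) (n : ℕ) : (x ^ n)⁻¹ * (x * a) ^ n ∈ A := by
  induction n with
  | zero => simp
  | succ n ih =>
    rw [inv_pow_succ_mul_mul_pow_succ]
    exact mul_mem (by simpa using Subgroup.Normal.conj_mem ‹_› _ ih x⁻¹) ha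

theorem mul_pow_pow_eq [IsMulCommutative A] (ha : a ∈ A) (k n : ℕ) :
    (x * a ^ k) ^ n = x ^ n * ((x ^ n)⁻¹ * (x * a) ^ n) ^ k := by
  induction n with
  | zero => simp
  | succ n ih =>
    set c := (x ^ n)⁻¹ * (x * a) ^ n
    have hconj : x⁻¹ * c * x ∈ A := by
      simpa using Subgroup.Normal.conj_mem ‹_› _ (inv_pow_mul_mul_pow_mem ha n) x⁻¹
    have hconj_pow : (x⁻¹ * c * x) ^ k = x⁻¹ * c ^ k * x := by
      simpa using conj_pow (a := x⁻¹) (b := c) (i := k)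
    rw [inv_pow_succ_mul_mul_pow_succ, Commute.mul_pow (setLike_mul_comm hconj ha), hconj_pow,
      pow_succ, ih]
    group

end

theorem stmt5_general {G : Type*} [Group G] (π : Set ℕ) (p : ℕ)
    (hU : ∀ m : ℕ, 0 < m → (∀ q : ℕ, q.Prime → q ∣ m → q ∉ π) →
      Function.Injective (fun x : G => x ^ m))
    (A : Subgroup G) [A.Normal] (hA : IsMulCommutative A) (hGA : commutator G ≤ A)
    (hGAtf : ∀ x : G, ∀ m : ℕ, 0 < m → (∀ q : ℕ, q.Prime → q ∣ m → q ∉ π) →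
      x ^ m ∈ A → x ∈ A)
    (x y : G) (m : ℕ) (hm : 0 < m) (hmπ : ∀ q : ℕ, q.Prime → q ∣ m → q ∉ π)
    (hxy : (x ^ m)⁻¹ * y ^ m ∈ A ∧ ((x ^ m)⁻¹ * y ^ m) ^ p = 1) :
    x⁻¹ * y ∈ A ∧ (x⁻¹ * y) ^ p = 1 := by
  obtain ⟨hc, hcp⟩ := hxy
  have haA : x⁻¹ * y ∈ A :=
    hGAtf _ m hm hmπ ((inv_mul_pow_mem_iff_of_commutator_le hGA x y m).mpr hc)
  have hroot : (x * (x⁻¹ * y) ^ p) ^ m = x ^ m := by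
    rw [mul_pow_pow_eq haA, mul_inv_cancel_left, hcp, mul_one]
  exact ⟨haA, mul_eq_left.mp (hU m hm hmπ hroot)⟩

/-- Let `G` be a metabelian `U_π`-group with abelian normal subgroup `A ⊇ G'` and
`G/A` being `π'`-torsion-free, and let `p ∈ π` be a prime. With
`B = {a ∈ A : a^p = 1}`, the quotient `G/B` is a `U_π`-group: if `x^m B = y^m B` for
`m ∈ π'` then `x B = y B`. -/
theorem stmt5 {G : Type*} [Group G] (π : Set ℕ) (p : ℕ) (hp : p.Prime) (hpπ : p ∈ π)
    (hU : ∀ m : ℕ, 0 < m → (∀ q : ℕ, q.Prime → q ∣ m → q ∉ π) →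
      Function.Injective (fun x : G => x ^ m))
    (A : Subgroup G) [A.Normal] (hA : IsMulCommutative A) (hGA : commutator G ≤ A)
    (hGAtf : ∀ x : G, ∀ m : ℕ, 0 < m → (∀ q : ℕ, q.Prime → q ∣ m → q ∉ π) →
      x ^ m ∈ A → x ∈ A)
    (x y : G) (m : ℕ) (hm : 0 < m) (hmπ : ∀ q : ℕ, q.Prime → q ∣ m → q ∉ π)
    (hxy : (x ^ m)⁻¹ * y ^ m ∈ A ∧ ((x ^ m)⁻¹ * y ^ m) ^ p = 1) :
    x⁻¹ * y ∈ A ∧ (x⁻¹ * y) ^ p = 1 :=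
  stmt5_general π p hU A hA hGA hGAtf x y m hm hmπ hxy
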